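/- Let n1,n2,α1,α2 ∈ ℂ with n1 ≠ 0 and 2n1n2−3n1−n2−3 = 0, and let a : ℂ → ℂ. Let U ⊆ ℂ be open and let x, y : ℂ → ℂ be differentiable on U with y(t) ≠ 0 for t ∈ U, satisfying the generalized Painlevé IV system with parameters (n1,n2; α1,α2) and coefficient function a(t) on U. Then x̃ := x + α2/y and ỹ := y satisfy the generalized Painlevé IV system on U with parameters (n1,n2; α1+α2−n1α2, −α2) and the same coefficient function a(t). -/

import Mathlib

/-!
The substitution `x̃ = x + α₂/y` leaves `y` alone, and the `y`-field, rewritten in `x̃` with the new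
parameters, is literally the old one. Differentiating `x̃ = x + α₂/y` gives
`x̃' = x' - α₂ y'/y²`, and substituting the two old equations turns this into the new `x`-field
evaluated at `(x̃, y)`: both facts are polynomial identities after clearing `y` and `n₁`.
-/

/-- `x, y : ℂ → ℂ` are differentiable on `U` and satisfy the generalized
Painlevé IV system with parameters `(n1,n2; b1,b2)` and coefficient function `a` on `U`. -/
def PIVSystem (n1 n2 b1 b2 : ℂ) (a : ℂ → ℂ) (U : Set ℂ) (x y : ℂ → ℂ) : Prop :=
  DifferentiableOn ℂ x U ∧ DifferentiableOn ℂ y U ∧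
  ∀ t ∈ U,
    (deriv x t = a t * ((x t) ^ 3 * y t + ((n1 * b2 - b1) / n1) * (x t) ^ 2
      + ((2 * n1 - 1) * t / (3 * n1)) * x t + (n1 + 1) / (6 * n1)))
    ∧
    (deriv y t = a t * (-((2 * n1 - 1) / n1) * (x t) ^ 2 * (y t) ^ 2
      + ((2 * b1 - (3 * n1 - 2) * b2) / n1) * x t * y t
      - ((2 * n1 - 1) / (3 * n1)) * t * y t
      + b2 * (b1 - (n1 - 1) * b2) / n1))

namespace PIVSystem

noncomputable def fieldX (n1 b1 b2 t x y : ℂ) : ℂ :=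
  x ^ 3 * y + ((n1 * b2 - b1) / n1) * x ^ 2 + ((2 * n1 - 1) * t / (3 * n1)) * x
    + (n1 + 1) / (6 * n1)

noncomputable def fieldY (n1 b1 b2 t x y : ℂ) : ℂ :=
  -((2 * n1 - 1) / n1) * x ^ 2 * y ^ 2 + ((2 * b1 - (3 * n1 - 2) * b2) / n1) * x * y
    - ((2 * n1 - 1) / (3 * n1)) * t * y + b2 * (b1 - (n1 - 1) * b2) / n1

theorem iff_fields {n1 n2 b1 b2 : ℂ} {a : ℂ → ℂ} {U : Set ℂ} {x y : ℂ → ℂ} :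
    PIVSystem n1 n2 b1 b2 a U x y ↔
      DifferentiableOn ℂ x U ∧ DifferentiableOn ℂ y U ∧
        ∀ t ∈ U, deriv x t = a t * fieldX n1 b1 b2 t (x t) (y t) ∧
          deriv y t = a t * fieldY n1 b1 b2 t (x t) (y t) :=
  Iff.rfl

theorem fieldY_shift (n1 b1 b2 t x : ℂ) {y : ℂ} (hy : y ≠ 0) :
    fieldY n1 (b1 + b2 - n1 * b2) (-b2) t (x + b2 / y) y = fieldY n1 b1 b2 t x y := by
  unfold fieldY
  field_simp
  ring

theorem fieldX_shift {n1 : ℂ} (hn1 : n1 ≠ 0) (b1 b2 t x : ℂ) {y : ℂ} (hy : y ≠ 0) :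
    fieldX n1 (b1 + b2 - n1 * b2) (-b2) t (x + b2 / y) y =
      fieldX n1 b1 b2 t x y - b2 * fieldY n1 b1 b2 t x y / y ^ 2 := by
  unfold fieldX fieldY
  field_simp
  ring

end PIVSystem

theorem deriv_add_const_div {x y : ℂ → ℂ} {t : ℂ} (hx : DifferentiableAt ℂ x t)
    (hy : DifferentiableAt ℂ y t) (hyt : y t ≠ 0) (c : ℂ) :
    deriv (fun s => x s + c / y s) t = deriv x t - c * deriv y t / y t ^ 2 := by
  rw [deriv_fun_add hx ((differentiableAt_const c).fun_div hy hyt), deriv_const_div c hy hyt]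
  ring

theorem piv_symmetry_s_general (n1 n2 a1 a2 : ℂ) (hn1 : n1 ≠ 0)
    (a : ℂ → ℂ) (U : Set ℂ) (hU : IsOpen U)
    (x y : ℂ → ℂ) (hy : ∀ t ∈ U, y t ≠ 0)
    (hxy : PIVSystem n1 n2 a1 a2 a U x y) :
    PIVSystem n1 n2 (a1 + a2 - n1 * a2) (-a2) a U (fun t => x t + a2 / y t) y := by
  obtain ⟨hx, hyd, hode⟩ := PIVSystem.iff_fields.mp hxy
  refine PIVSystem.iff_fields.mpr
    ⟨hx.add ((differentiableOn_const a2).div hyd hy), hyd, fun t ht => ?_⟩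
  obtain ⟨hdx, hdy⟩ := hode t ht
  have hyt := hy t ht
  have hderiv := deriv_add_const_div (hx.differentiableAt (hU.mem_nhds ht))
    (hyd.differentiableAt (hU.mem_nhds ht)) hyt a2
  refine ⟨?_, ?_⟩
  · rw [hderiv, PIVSystem.fieldX_shift hn1 _ _ _ _ hyt, hdx, hdy]
    ring
  · rw [PIVSystem.fieldY_shift _ _ _ _ _ hyt, hdy]

/-- Birational symmetry `s` of the generalized Painlevé IV system:
`(x, y) ↦ (x + α2/y, y)` with parameters `(n1,n2; α1+α2−n1α2, −α2)`. -/
theorem piv_symmetry_s (n1 n2 a1 a2 : ℂ) (hn1 : n1 ≠ 0)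
    (hrel : 2 * n1 * n2 - 3 * n1 - n2 - 3 = 0)
    (a : ℂ → ℂ) (U : Set ℂ) (hU : IsOpen U)
    (x y : ℂ → ℂ) (hy : ∀ t ∈ U, y t ≠ 0)
    (hxy : PIVSystem n1 n2 a1 a2 a U x y) :
    PIVSystem n1 n2 (a1 + a2 - n1 * a2) (-a2) a U (fun t => x t + a2 / y t) y :=
  piv_symmetry_s_general n1 n2 a1 a2 hn1 a U hU x y hy hxy
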